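/- Let γ ≥ 0, d > 0, λ > 0, and 0 < B < A. Then ∫_0^1 s^γ (1-s)^{d-1} / (A - B s)^{d+λ} ds ≤ (Γ(d) Γ(λ) / Γ(d+λ)) · 1 / (B^d (A - B)^λ), where Γ denotes the Gamma function. -/

import Mathlib

/-!
The substitution `u = B (1 - s) / (A - B s)` maps `(0, 1)` onto `(0, B / A)` and turns
`(1 - s)^(d-1) / (A - B s)^(d+λ) ds` into `B^(-d) (A - B)^(-λ) u^(d-1) (1 - u)^(λ-1) du`.
Since `B / A < 1`, the resulting integral is at most the Beta integral `B(d, λ)`, and the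
factor `s^γ ≤ 1` only makes the left-hand side smaller.
-/

open MeasureTheory Real Set ProbabilityTheory

section BetaIntegral

variable {a b : ℝ}

lemma rpow_mul_one_sub_rpow_nonneg_ae (a b : ℝ) :
    0 ≤ᵐ[volume.restrict (Ioo 0 1)] fun x : ℝ ↦ x ^ (a - 1) * (1 - x) ^ (b - 1) := by
  filter_upwards [ae_restrict_mem measurableSet_Ioo] with x hx
  exact mul_nonneg (rpow_nonneg hx.1.le _) (rpow_nonneg (sub_nonneg.2 hx.2.le) _)

theorem lintegral_rpow_mul_one_sub_rpow (ha : 0 < a) (hb : 0 < b) :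
    ∫⁻ x in Ioo 0 1, ENNReal.ofReal (x ^ (a - 1) * (1 - x) ^ (b - 1)) =
      ENNReal.ofReal (beta a b) := by
  have h := lintegral_betaPDF_eq_one ha hb
  rw [lintegral_betaPDF] at h
  simp_rw [mul_assoc, ENNReal.ofReal_mul (one_div_pos.2 (beta_pos ha hb)).le] at h
  rw [lintegral_const_mul' _ _ ENNReal.ofReal_ne_top, mul_comm] at h
  rw [ENNReal.eq_inv_of_mul_eq_one_left h,
    ← ENNReal.ofReal_inv_of_pos (one_div_pos.2 (beta_pos ha hb)), one_div, inv_inv]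

theorem integrableOn_rpow_mul_one_sub_rpow (ha : 0 < a) (hb : 0 < b) :
    IntegrableOn (fun x : ℝ ↦ x ^ (a - 1) * (1 - x) ^ (b - 1)) (Ioo 0 1) := by
  refine (lintegral_ofReal_ne_top_iff_integrable (by fun_prop)
    (rpow_mul_one_sub_rpow_nonneg_ae a b)).1 ?_
  rw [lintegral_rpow_mul_one_sub_rpow ha hb]
  exact ENNReal.ofReal_ne_top

theorem integral_rpow_mul_one_sub_rpow (ha : 0 < a) (hb : 0 < b) :
    ∫ x in Ioo 0 1, x ^ (a - 1) * (1 - x) ^ (b - 1) = beta a b := by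
  rw [integral_eq_lintegral_of_nonneg_ae (rpow_mul_one_sub_rpow_nonneg_ae a b) (by fun_prop),
    lintegral_rpow_mul_one_sub_rpow ha hb, ENNReal.toReal_ofReal (beta_pos ha hb).le]

end BetaIntegral

noncomputable def betaSubst (A B s : ℝ) : ℝ := B * (1 - s) / (A - B * s)

section BetaSubst

variable {A B : ℝ}

lemma sub_mul_pos_of_lt_one (hB : 0 < B) (hBA : B < A) {s : ℝ} (hs : s < 1) :
    0 < A - B * s := by
  nlinarith

lemma hasDerivAt_betaSubst {s : ℝ} (hs : A - B * s ≠ 0) :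
    HasDerivAt (betaSubst A B) (-(B * (A - B)) / (A - B * s) ^ 2) s :=
  (((hasDerivAt_id s).const_sub 1).const_mul B).div
    (((hasDerivAt_id s).const_mul B).const_sub A) hs |>.congr_deriv (by simp only [id]; ring)

lemma one_sub_betaSubst {s : ℝ} (hs : A - B * s ≠ 0) :
    1 - betaSubst A B s = (A - B) / (A - B * s) := by
  unfold betaSubst
  field_simp
  ring

lemma bijOn_betaSubst (hB : 0 < B) (hBA : B < A) :
    BijOn (betaSubst A B) (Ioo 0 1) (Ioo 0 (B / A)) := by
  have hA : 0 < A := hB.trans hBA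
  have hAB : A - B ≠ 0 := by linarith
  have bounds_of_mem {u : ℝ} (hu : u ∈ Ioo 0 (B / A)) : A * u < B ∧ u < 1 := by
    have := (lt_div_iff₀' hA).1 hu.2
    exact ⟨this, by nlinarith [hu.1]⟩
  refine InvOn.bijOn (f' := fun u ↦ (B - A * u) / (B * (1 - u))) ⟨?_, ?_⟩ ?_ ?_
  · intro s hs
    have hX := (sub_mul_pos_of_lt_one hB hBA hs.2).ne'
    dsimp only
    rw [one_sub_betaSubst hX, div_eq_iff (by simp [hB.ne', hAB, hX]), betaSubst]
    field_simp
    ring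
  · intro u hu
    have : 1 - u ≠ 0 := by linarith [(bounds_of_mem hu).2]
    have hX : A - B * ((B - A * u) / (B * (1 - u))) = (A - B) / (1 - u) := by
      field_simp
      ring
    rw [betaSubst, hX, div_eq_iff (by simp [hAB, this])]
    field_simp
    ring
  · intro s hs
    have hX := sub_mul_pos_of_lt_one hB hBA hs.2
    have : 0 < 1 - s := by linarith [hs.2]
    refine ⟨by unfold betaSubst; positivity, ?_⟩
    rw [betaSubst, div_lt_div_iff₀ hX hA]
    nlinarith [mul_pos (mul_pos hB hs.1) (sub_pos.2 hBA)]
  · intro u hu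
    obtain ⟨hAu, hu1⟩ := bounds_of_mem hu
    have : 0 < B * (1 - u) := by nlinarith
    rw [mem_Ioo, lt_div_iff₀ this, div_lt_iff₀ this]
    constructor <;> nlinarith [hu.1]

lemma abs_deriv_mul_rpow_betaSubst (hB : 0 < B) (hBA : B < A) (d lam : ℝ) {s : ℝ}
    (hs : s ∈ Ioo 0 1) :
    |-(B * (A - B)) / (A - B * s) ^ 2| *
        (betaSubst A B s ^ (d - 1) * (1 - betaSubst A B s) ^ (lam - 1)) =
      B ^ d * (A - B) ^ lam * ((1 - s) ^ (d - 1) / (A - B * s) ^ (d + lam)) := by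
  have hX := sub_mul_pos_of_lt_one hB hBA hs.2
  have hc : 0 < A - B := sub_pos.2 hBA
  have h1s : 0 < 1 - s := sub_pos.2 hs.2
  rw [one_sub_betaSubst hX.ne', betaSubst, abs_div, abs_neg, abs_of_pos (mul_pos hB hc),
    abs_of_pos (by positivity), div_rpow (by positivity) hX.le, div_rpow hc.le hX.le,
    mul_rpow hB.le h1s.le, rpow_sub_one hB.ne' d, rpow_sub_one hc.ne' lam,
    rpow_sub_one hX.ne' d, rpow_sub_one hX.ne' lam, rpow_add hX]
  field_simp

lemma hasDerivWithinAt_betaSubst (hB : 0 < B) (hBA : B < A) :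
    ∀ s ∈ Ioo (0 : ℝ) 1,
      HasDerivWithinAt (betaSubst A B) (-(B * (A - B)) / (A - B * s) ^ 2) (Ioo 0 1) s :=
  fun _ hs ↦ (hasDerivAt_betaSubst (sub_mul_pos_of_lt_one hB hBA hs.2).ne').hasDerivWithinAt

theorem integral_one_sub_rpow_div_rpow (hB : 0 < B) (hBA : B < A) (d lam : ℝ) :
    ∫ s in Ioo 0 1, (1 - s) ^ (d - 1) / (A - B * s) ^ (d + lam) =
      (B ^ d * (A - B) ^ lam)⁻¹ * ∫ u in Ioo 0 (B / A), u ^ (d - 1) * (1 - u) ^ (lam - 1) := by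
  have hK : B ^ d * (A - B) ^ lam ≠ 0 := by
    have hc := sub_pos.2 hBA
    positivity
  rw [← (bijOn_betaSubst hB hBA).image_eq, integral_image_eq_integral_abs_deriv_smul
    measurableSet_Ioo (hasDerivWithinAt_betaSubst hB hBA) (bijOn_betaSubst hB hBA).injOn,
    ← integral_const_mul]
  refine setIntegral_congr_fun measurableSet_Ioo fun s hs ↦ ?_
  rw [smul_eq_mul, abs_deriv_mul_rpow_betaSubst hB hBA d lam hs, inv_mul_cancel_left₀ hK]

theorem integrableOn_one_sub_rpow_div_rpow (hB : 0 < B) (hBA : B < A) {d lam : ℝ} (hd : 0 < d)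
    (hlam : 0 < lam) :
    IntegrableOn (fun s ↦ (1 - s) ^ (d - 1) / (A - B * s) ^ (d + lam)) (Ioo 0 1) := by
  have hK : B ^ d * (A - B) ^ lam ≠ 0 := by
    have hc := sub_pos.2 hBA
    positivity
  have hBA_div : B / A ≤ 1 := (div_le_one (hB.trans hBA)).2 hBA.le
  have h := (integrableOn_image_iff_integrableOn_abs_deriv_smul measurableSet_Ioo
    (hasDerivWithinAt_betaSubst hB hBA) (bijOn_betaSubst hB hBA).injOn _).1
    (((bijOn_betaSubst hB hBA).image_eq).symm ▸
      (integrableOn_rpow_mul_one_sub_rpow hd hlam).mono_set (Ioo_subset_Ioo_right hBA_div))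
  rw [integrableOn_congr_fun (fun s hs ↦ by
    rw [smul_eq_mul, abs_deriv_mul_rpow_betaSubst hB hBA d lam hs]) measurableSet_Ioo] at h
  exact (integrable_const_mul_iff (IsUnit.mk0 _ hK) _).1 h

theorem integral_one_sub_rpow_div_rpow_le (hB : 0 < B) (hBA : B < A) {d lam : ℝ} (hd : 0 < d)
    (hlam : 0 < lam) :
    ∫ s in Ioo 0 1, (1 - s) ^ (d - 1) / (A - B * s) ^ (d + lam) ≤
      beta d lam / (B ^ d * (A - B) ^ lam) := by
  have hBA_div : B / A ≤ 1 := (div_le_one (hB.trans hBA)).2 hBA.le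
  have hc := sub_pos.2 hBA
  calc ∫ s in Ioo 0 1, (1 - s) ^ (d - 1) / (A - B * s) ^ (d + lam)
      = (B ^ d * (A - B) ^ lam)⁻¹ *
          ∫ u in Ioo 0 (B / A), u ^ (d - 1) * (1 - u) ^ (lam - 1) :=
        integral_one_sub_rpow_div_rpow hB hBA d lam
    _ ≤ (B ^ d * (A - B) ^ lam)⁻¹ * ∫ u in Ioo 0 1, u ^ (d - 1) * (1 - u) ^ (lam - 1) := by
        refine mul_le_mul_of_nonneg_left ?_ (by positivity)
        exact setIntegral_mono_set (integrableOn_rpow_mul_one_sub_rpow hd hlam)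
          (rpow_mul_one_sub_rpow_nonneg_ae d lam) (Ioo_subset_Ioo_right hBA_div).eventuallyLE
    _ = beta d lam / (B ^ d * (A - B) ^ lam) := by
        rw [integral_rpow_mul_one_sub_rpow hd hlam, div_eq_inv_mul]

end BetaSubst

/-- Beta function bound with a nonnegative power of `s`: for `γ ≥ 0`, `d, λ > 0`, and
`0 < B < A`, `∫_0^1 s^γ (1-s)^{d-1}/(A-Bs)^{d+λ} ds ≤ (Γ(d)Γ(λ)/Γ(d+λ)) B^{-d} (A-B)^{-λ}`. -/
theorem integral_with_power_le_beta (γ d lam A B : ℝ) (hγ : 0 ≤ γ) (hd : 0 < d)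
    (hlam : 0 < lam) (hB : 0 < B) (hBA : B < A) :
    (∫ s in Set.Ioo (0 : ℝ) 1, s ^ γ * (1 - s) ^ (d - 1) / (A - B * s) ^ (d + lam)) ≤
      Real.Gamma d * Real.Gamma lam / Real.Gamma (d + lam) *
        (1 / (B ^ d * (A - B) ^ lam)) := by
  have h_nonneg : ∀ s ∈ Ioo (0 : ℝ) 1, 0 ≤ (1 - s) ^ (d - 1) / (A - B * s) ^ (d + lam) :=
    fun s hs ↦ div_nonneg (rpow_nonneg (sub_pos.2 hs.2).le _)
      (rpow_nonneg (sub_mul_pos_of_lt_one hB hBA hs.2).le _)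
  calc (∫ s in Ioo (0 : ℝ) 1, s ^ γ * (1 - s) ^ (d - 1) / (A - B * s) ^ (d + lam))
      ≤ ∫ s in Ioo 0 1, (1 - s) ^ (d - 1) / (A - B * s) ^ (d + lam) := by
        refine integral_mono_of_nonneg ?_ (integrableOn_one_sub_rpow_div_rpow hB hBA hd hlam) ?_
          <;> filter_upwards [ae_restrict_mem measurableSet_Ioo] with s hs <;>
          rw [mul_div_assoc]
        · exact mul_nonneg (rpow_nonneg hs.1.le _) (h_nonneg s hs)
        · exact mul_le_of_le_one_left (h_nonneg s hs) (rpow_le_one hs.1.le hs.2.le hγ)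
    _ ≤ beta d lam / (B ^ d * (A - B) ^ lam) := integral_one_sub_rpow_div_rpow_le hB hBA hd hlam
    _ = _ := div_eq_mul_one_div _ _
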